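/- arXiv:1302.6908 — 2 statements merged into one kernel-verified Lean document; each statement's English description precedes it below -/
import Mathlib

section
/- Let p ∈ H[1, n], i.e., p(z) = 1 + a_n z^n + ... analytic in the unit disk U. Suppose there exists z_0 ∈ U such that Re(p(z)) > 0 for |z| < |z_0|, Re(p(z_0)) = 0, and p(z_0) ≠ 0. Then z_0 p'(z_0)/p(z_0) = i l for some real number l with |l| ≥ n. -/
/-!
Apply Jack's lemma to the Cayley transform `w = (1 - p) / (1 + p)`. Since `Re p ≥ 0` on the closed
disc of radius `r = |z₀|`, `|w| ≤ 1` there, and `w` vanishes to order `n` at the origin, so by the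
maximum modulus principle `|w z| ≤ (|z| / r) ^ n`, with equality at `z₀` because `Re p(z₀) = 0`.
Differentiating `|w|²` along the radius and along the circle through `z₀` shows that
`z₀ w'(z₀) / w(z₀)` is a real number `k ≥ n`. Writing `p(z₀) = iρ`, this reads
`z₀ p'(z₀) / p(z₀) = i k (1 + ρ²) / (2ρ)`, and `(1 + ρ²) / (2|ρ|) ≥ 1`.
-/

open Complex Metric Function Set Filter Topology

lemma iterate_dslope_eq_iteratedDeriv_div {f : ℂ → ℂ} {c : ℂ} (hf : AnalyticAt ℂ f c) (k : ℕ) :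
    (swap dslope c)^[k] f c = iteratedDeriv k f c / k.factorial := by
  rw [← (hf.hasFPowerSeriesAt.has_fpower_series_iterate_dslope_fslope k).coeff_zero 1,
    ← FormalMultilinearSeries.coeff, FormalMultilinearSeries.coeff_iterate_fslope,
    FormalMultilinearSeries.coeff_ofScalars, zero_add]

lemma differentiableOn_iterate_dslope {f : ℂ → ℂ} {s : Set ℂ} {c : ℂ} (hs : s ∈ 𝓝 c)
    (hf : DifferentiableOn ℂ f s) (k : ℕ) : DifferentiableOn ℂ ((swap dslope c)^[k] f) s := by
  induction k with
  | zero => exact hf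
  | succ k ih =>
    rw [iterate_succ_apply']
    exact (differentiableOn_dslope hs).mpr ih

lemma exists_eq_add_pow_mul_of_iteratedDeriv_eq_zero {f : ℂ → ℂ} {s : Set ℂ} {n : ℕ}
    (hs : s ∈ 𝓝 0) (hf : DifferentiableOn ℂ f s)
    (hcoef : ∀ k, 1 ≤ k → k < n → iteratedDeriv k f 0 = 0) :
    ∃ g, DifferentiableOn ℂ g s ∧ ∀ z, f z = f 0 + z ^ n * g z := by
  set q : ℂ → ℂ := fun z ↦ -f 0 + f z
  have hq : DifferentiableOn ℂ q s := (differentiableOn_const _).add hf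
  have hq_coef : ∀ k < n, (swap dslope 0)^[k] q 0 = 0 := by
    intro k hk
    rw [iterate_dslope_eq_iteratedDeriv_div (hq.analyticAt hs)]
    rcases k.eq_zero_or_pos with rfl | hk0
    · simp [q]
    · rw [iteratedDeriv_const_add hk0, hcoef k hk0 hk, zero_div]
  refine ⟨(swap dslope 0)^[n] q, differentiableOn_iterate_dslope hs hq n, fun z ↦ ?_⟩
  have := pow_sub_smul_iterate_dslope_of_zero n hq_coef z
  rw [sub_zero, smul_eq_mul] at this
  rw [this]
  ring

lemma norm_le_div_pow_of_eq_pow_mul {w g : ℂ → ℂ} {r : ℝ} {n : ℕ} (hr : 0 < r)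
    (hg : DifferentiableOn ℂ g (closedBall 0 r))
    (hwg : ∀ z ∈ closedBall 0 r, w z = z ^ n * g z) (hw : ∀ z ∈ sphere 0 r, ‖w z‖ ≤ 1)
    {z : ℂ} (hz : z ∈ closedBall 0 r) : ‖w z‖ ≤ (‖z‖ / r) ^ n := by
  have hg_sphere : ∀ x ∈ frontier (ball (0 : ℂ) r), ‖g x‖ ≤ 1 / r ^ n := by
    intro x hx
    rw [frontier_ball 0 hr.ne'] at hx
    have := hw x hx
    rw [hwg x (sphere_subset_closedBall hx), norm_mul, norm_pow,
      mem_sphere_zero_iff_norm.mp hx] at this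
    rw [le_div_iff₀ (by positivity)]
    linarith
  have hgz : ‖g z‖ ≤ 1 / r ^ n := by
    rw [← closure_ball 0 hr.ne'] at hg hz
    exact norm_le_of_forall_mem_frontier_norm_le isBounded_ball hg.diffContOnCl hg_sphere hz
  calc ‖w z‖ = ‖z‖ ^ n * ‖g z‖ := by rw [hwg z hz, norm_mul, norm_pow]
    _ ≤ ‖z‖ ^ n * (1 / r ^ n) := by gcongr
    _ = (‖z‖ / r) ^ n := by rw [div_pow, mul_one_div]

noncomputable def cayley (v : ℂ) : ℂ := (1 - v) / (1 + v)

lemma normSq_one_add_eq (v : ℂ) : normSq (1 + v) = normSq (1 - v) + 4 * v.re := by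
  simp only [normSq_apply, add_re, add_im, sub_re, sub_im, one_re, one_im]
  ring

lemma one_add_ne_zero_of_re_nonneg {v : ℂ} (hv : 0 ≤ v.re) : 1 + v ≠ 0 := by
  intro h
  have := congrArg re h
  simp only [add_re, one_re, zero_re] at this
  linarith

lemma norm_cayley_le_one {v : ℂ} (hv : 0 ≤ v.re) : ‖cayley v‖ ≤ 1 := by
  rw [cayley, norm_div, div_le_one (norm_pos_iff.mpr (one_add_ne_zero_of_re_nonneg hv)),
    ← sq_le_sq₀ (norm_nonneg _) (norm_nonneg _), Complex.sq_norm, Complex.sq_norm,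
    normSq_one_add_eq]
  linarith

lemma norm_cayley_eq_one {v : ℂ} (hv : v.re = 0) : ‖cayley v‖ = 1 := by
  rw [cayley, norm_div, div_eq_one_iff_eq (norm_ne_zero_iff.mpr
      (one_add_ne_zero_of_re_nonneg hv.ge)),
    ← sq_eq_sq₀ (norm_nonneg _) (norm_nonneg _), Complex.sq_norm, Complex.sq_norm,
    normSq_one_add_eq, hv]
  ring

lemma HasDerivAt.cayley {p : ℂ → ℂ} {p' z : ℂ} (hp : HasDerivAt p p' z) (hz : 1 + p z ≠ 0) :
    HasDerivAt (fun z ↦ cayley (p z)) (-2 * p' / (1 + p z) ^ 2) z := by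
  refine (((hasDerivAt_const z 1).fun_sub hp).fun_div
    ((hasDerivAt_const z 1).fun_add hp) hz).congr_deriv ?_
  ring

lemma norm_cayley_le_pow {p h : ℂ → ℂ} {r : ℝ} {n : ℕ} (hr : 0 < r)
    (hp : DifferentiableOn ℂ p (closedBall 0 r)) (hh : DifferentiableOn ℂ h (closedBall 0 r))
    (hfac : ∀ z, p z = 1 + z ^ n * h z) (hre : ∀ z ∈ closedBall 0 r, 0 ≤ (p z).re)
    {z : ℂ} (hz : z ∈ closedBall 0 r) : ‖cayley (p z)‖ ≤ (‖z‖ / r) ^ n := by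
  have hne : ∀ z ∈ closedBall 0 r, 1 + p z ≠ 0 := fun z hz ↦
    one_add_ne_zero_of_re_nonneg (hre z hz)
  refine norm_le_div_pow_of_eq_pow_mul (g := fun z ↦ -h z / (1 + p z)) hr
    (hh.neg.div ((differentiableOn_const 1).add hp) hne) (fun z hz ↦ ?_)
    (fun z hz ↦ norm_cayley_le_one (hre z (sphere_subset_closedBall hz))) hz
  rw [cayley, hfac z]
  field_simp [hfac z ▸ hne z hz]
  ring

lemma HasDerivAt.norm_sq_comp {w : ℂ → ℂ} {γ : ℝ → ℂ} {W v : ℂ} {s : ℝ}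
    (hw : HasDerivAt w W (γ s)) (hγ : HasDerivAt γ v s) (hw0 : w (γ s) ≠ 0) :
    HasDerivAt (fun t ↦ ‖w (γ t)‖ ^ 2) (2 * ‖w (γ s)‖ ^ 2 * (v * W / w (γ s)).re) s := by
  refine ((hw.comp s hγ).norm_sq).congr_deriv ?_
  have h : W * v * (starRingEnd ℂ) (w (γ s)) = (‖w (γ s)‖ ^ 2 : ℝ) * (v * W / w (γ s)) := by
    rw [Complex.ofReal_pow, ← Complex.mul_conj', mul_comm (w (γ s))]
    field_simp
  rw [Complex.inner, comp_apply, h, Complex.re_ofReal_mul, mul_assoc]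

lemma le_re_mul_deriv_div_of_norm_le_pow {w : ℂ → ℂ} {W z₀ : ℂ} {n : ℕ}
    (hw : HasDerivAt w W z₀) (hw0 : w z₀ ≠ 0)
    (hrad : ∀ t ∈ Icc (0 : ℝ) 1, ‖w (t * z₀)‖ ≤ t ^ n * ‖w z₀‖) :
    n ≤ (z₀ * W / w z₀).re := by
  set c := ‖w z₀‖
  have hc : 0 < c := norm_pos_iff.mpr hw0
  have hγ : HasDerivAt (fun t : ℝ ↦ (t : ℂ) * z₀) z₀ 1 := by
    simpa using (hasDerivAt_id (1 : ℝ)).ofReal_comp.mul_const z₀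
  have hu : HasDerivAt (fun t : ℝ ↦ ‖w (t * z₀)‖ ^ 2 - (t ^ n * c) ^ 2)
      (2 * c ^ 2 * (z₀ * W / w z₀).re - 2 * n * c ^ 2) 1 := by
    have h1 := HasDerivAt.norm_sq_comp (by simpa using hw) hγ (by simpa using hw0)
    have h2 := ((hasDerivAt_pow n (1 : ℝ)).mul_const c).pow 2
    simp only [ofReal_one, one_mul] at h1
    refine (h1.sub h2).congr_deriv ?_
    push_cast
    ring
  have hmax : IsMaxOn (fun t : ℝ ↦ ‖w (t * z₀)‖ ^ 2 - (t ^ n * c) ^ 2) (Icc 0 1) 1 := by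
    intro t ht
    simp only [mem_ofPred_eq, ofReal_one, one_mul, one_pow, c, sub_self, sub_nonpos]
    exact pow_le_pow_left₀ (norm_nonneg _) (hrad t ht) 2
  have hneg : (-1 : ℝ) ∈ posTangentConeAt (Icc (0 : ℝ) 1) 1 :=
    mem_posTangentConeAt_of_segment_subset (by norm_num [segment_eq_Icc'])
  have := hmax.localize.hasFDerivWithinAt_nonpos hu.hasFDerivAt.hasFDerivWithinAt hneg
  rw [ContinuousLinearMap.toSpanSingleton_apply, smul_eq_mul] at this
  nlinarith [pow_pos hc 2]

lemma im_mul_deriv_div_eq_zero_of_norm_le {w : ℂ → ℂ} {W z₀ : ℂ}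
    (hw : HasDerivAt w W z₀) (hw0 : w z₀ ≠ 0)
    (hcirc : ∀ z, ‖z‖ = ‖z₀‖ → ‖w z‖ ≤ ‖w z₀‖) :
    (z₀ * W / w z₀).im = 0 := by
  set γ : ℝ → ℂ := fun θ ↦ z₀ * exp (θ * I)
  have hγ0 : γ 0 = z₀ := by simp [γ]
  have hγ : HasDerivAt γ (z₀ * I) 0 := by
    simpa [γ] using (((hasDerivAt_id (0 : ℝ)).ofReal_comp.mul_const I).cexp).const_mul z₀
  have hmax : IsLocalMax (fun θ ↦ ‖w (γ θ)‖ ^ 2) 0 := by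
    refine Eventually.of_forall fun θ ↦ ?_
    have : ‖γ θ‖ = ‖z₀‖ := by simp [γ, norm_exp_ofReal_mul_I]
    simp only [hγ0]
    exact pow_le_pow_left₀ (norm_nonneg _) (hcirc _ this) 2
  have := hmax.hasDerivAt_eq_zero (HasDerivAt.norm_sq_comp (hγ0 ▸ hw) hγ (hγ0 ▸ hw0))
  rw [hγ0, show z₀ * I * W / w z₀ = z₀ * W / w z₀ * I by ring, mul_I_re] at this
  simpa [hw0] using this

theorem jack_lemma {w : ℂ → ℂ} {W z₀ : ℂ} {n : ℕ} (hw : HasDerivAt w W z₀) (hz₀ : z₀ ≠ 0)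
    (hw0 : w z₀ ≠ 0) (hbound : ∀ z ∈ closedBall 0 ‖z₀‖, ‖w z‖ ≤ (‖z‖ / ‖z₀‖) ^ n * ‖w z₀‖) :
    ∃ k : ℝ, z₀ * W / w z₀ = k ∧ n ≤ k := by
  have hr : 0 < ‖z₀‖ := norm_pos_iff.mpr hz₀
  refine ⟨(z₀ * W / w z₀).re, ?_, le_re_mul_deriv_div_of_norm_le_pow hw hw0 fun t ht ↦ ?_⟩
  · refine Complex.ext rfl ?_
    rw [ofReal_im]
    refine im_mul_deriv_div_eq_zero_of_norm_le hw hw0 fun z hz ↦ ?_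
    simpa [hz, hr.ne'] using hbound z (by simp [hz])
  · have hnorm : ‖(t : ℂ) * z₀‖ = t * ‖z₀‖ := by
      rw [norm_mul, norm_real, Real.norm_of_nonneg ht.1]
    have := hbound _ (by rw [mem_closedBall_zero_iff, hnorm]; nlinarith [ht.2])
    rwa [hnorm, mul_div_cancel_right₀ _ hr.ne'] at this

lemma re_nonneg_of_mem_closure {X : Type*} [TopologicalSpace X] {f : X → ℂ} {s : Set X}
    (hf : ContinuousOn f (closure s)) (hs : ∀ x ∈ s, 0 < (f x).re) {x : X}
    (hx : x ∈ closure s) : 0 ≤ (f x).re :=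
  closure_minimal (t := {w : ℂ | 0 ≤ w.re}) (image_subset_iff.mpr fun y hy ↦ (hs y hy).le)
    (isClosed_le continuous_const continuous_re) (hf.image_closure (mem_image_of_mem f hx))

lemma mul_div_eq_of_cayley {z D A : ℂ} {k : ℝ} (hA : A.re = 0) (hA0 : A ≠ 0)
    (h : z * (-2 * D / (1 + A) ^ 2) / cayley A = k) :
    z * D / A = ((k * (1 + A.im ^ 2) / (2 * A.im) : ℝ) : ℂ) * I := by
  obtain ⟨ρ, rfl⟩ : ∃ ρ : ℝ, A = ρ * I := ⟨A.im, by simpa [hA] using (re_add_im A).symm⟩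
  have hρ : (ρ : ℂ) ≠ 0 := by simpa using hA0
  have h1 : 1 + ρ * I ≠ 0 := one_add_ne_zero_of_re_nonneg hA.ge
  have h2 : 1 - ρ * I ≠ 0 := by
    intro h0
    simpa using congrArg re h0
  rw [cayley] at h
  field_simp at h
  simp only [mul_I_im, ofReal_re]
  rw [div_eq_iff hA0]
  push_cast
  field_simp
  linear_combination (-1 : ℂ) * h - k * I_sq

lemma le_abs_mul_one_add_sq_div (k : ℝ) {ρ : ℝ} (hρ : ρ ≠ 0) :
    k ≤ |k * (1 + ρ ^ 2) / (2 * ρ)| := by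
  have hρ' : 0 < |ρ| := abs_pos.mpr hρ
  rw [abs_div, abs_mul, abs_mul, abs_two, abs_of_pos (by positivity : (0 : ℝ) < 1 + ρ ^ 2),
    le_div_iff₀ (by positivity)]
  nlinarith [le_abs_self k, abs_nonneg k, sq_nonneg (|ρ| - 1), sq_abs ρ]

theorem nunokawa_corollary_general (p : ℂ → ℂ) (n : ℕ)
    (hp : AnalyticOnNhd ℂ p (ball (0:ℂ) 1))
    (hp0 : p 0 = 1)
    (hcoef : ∀ k : ℕ, 1 ≤ k → k < n → iteratedDeriv k p 0 = 0)
    (z₀ : ℂ) (hz₀ : z₀ ∈ ball (0:ℂ) 1)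
    (hre : ∀ z : ℂ, ‖z‖ < ‖z₀‖ → 0 < (p z).re)
    (hre0 : (p z₀).re = 0) (hne : p z₀ ≠ 0) :
    ∃ l : ℝ, z₀ * deriv p z₀ / p z₀ = (l : ℂ) * I ∧ (n : ℝ) ≤ |l| := by
  have hz₀0 : z₀ ≠ 0 := by
    rintro rfl
    simp [hp0] at hre0
  have hr : 0 < ‖z₀‖ := norm_pos_iff.mpr hz₀0
  have hball : closedBall (0 : ℂ) ‖z₀‖ ⊆ ball 0 1 :=
    closedBall_subset_ball (mem_ball_zero_iff.mp hz₀)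
  have hpd : DifferentiableOn ℂ p (ball 0 1) := hp.differentiableOn
  have hre_le : ∀ z ∈ closedBall (0 : ℂ) ‖z₀‖, 0 ≤ (p z).re := by
    rw [← closure_ball (0 : ℂ) hr.ne'] at hball ⊢
    exact fun z ↦ re_nonneg_of_mem_closure (hpd.continuousOn.mono hball)
      fun z hz ↦ hre z (mem_ball_zero_iff.mp hz)
  obtain ⟨h, hh, hfac⟩ :=
    exists_eq_add_pow_mul_of_iteratedDeriv_eq_zero (ball_mem_nhds 0 one_pos) hpd hcoef
  rw [hp0] at hfac
  have hw1 : ‖cayley (p z₀)‖ = 1 := norm_cayley_eq_one hre0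
  have hbound (z : ℂ) (hz : z ∈ closedBall 0 ‖z₀‖) :
      ‖cayley (p z)‖ ≤ (‖z‖ / ‖z₀‖) ^ n * ‖cayley (p z₀)‖ := by
    rw [hw1, mul_one]
    exact norm_cayley_le_pow hr (hpd.mono hball) (hh.mono hball) hfac hre_le hz
  obtain ⟨k, hk, hnk⟩ := jack_lemma
    ((hp z₀ hz₀).differentiableAt.hasDerivAt.cayley (one_add_ne_zero_of_re_nonneg hre0.ge))
    hz₀0 (norm_ne_zero_iff.mp (hw1 ▸ one_ne_zero)) hbound
  exact ⟨_, mul_div_eq_of_cayley hre0 hne hk,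
    hnk.trans (le_abs_mul_one_add_sq_div k fun h0 ↦ hne (Complex.ext hre0 h0))⟩

theorem nunokawa_corollary (p : ℂ → ℂ) (n : ℕ) (hn : 1 ≤ n)
    (hp : AnalyticOnNhd ℂ p (ball (0:ℂ) 1))
    (hp0 : p 0 = 1)
    (hcoef : ∀ k : ℕ, 1 ≤ k → k < n → iteratedDeriv k p 0 = 0)
    (z₀ : ℂ) (hz₀ : z₀ ∈ ball (0:ℂ) 1)
    (hre : ∀ z : ℂ, ‖z‖ < ‖z₀‖ → 0 < (p z).re)
    (hre0 : (p z₀).re = 0) (hne : p z₀ ≠ 0) :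
    ∃ l : ℝ, z₀ * deriv p z₀ / p z₀ = (l : ℂ) * I ∧ (n : ℝ) ≤ |l| :=
  nunokawa_corollary_general p n hp hp0 hcoef z₀ hz₀ hre hre0 hne
end

section
/- Let p be analytic at z_0 ∈ ℂ, z_0 ≠ 0, with p(z_0) = iβ for real β ≠ 0, a_0 > 0 real, and suppose −2a_0 z_0 p'(z_0)/(a_0² + β²) = m for some real m ≥ n > 0. Then z_0 p'(z_0) = −(m/2)(a_0 + β²/a_0) is real, and writing z_0 p'(z_0)/p(z_0) = i l with l real, one has l = (m/(2β))(a_0 + β²/a_0). -/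
open Complex

lemma eq_neg_half_mul_of_neg_two_mul_div_eq {a β m : ℝ} (ha : 0 < a) {w : ℂ}
    (h : -2 * (a : ℂ) * w / ((a ^ 2 + β ^ 2 : ℝ) : ℂ) = (m : ℂ)) :
    w = ((-(m / 2) * (a + β ^ 2 / a) : ℝ) : ℂ) := by
  have hden : ((a ^ 2 + β ^ 2 : ℝ) : ℂ) ≠ 0 := by exact_mod_cast (by positivity : 0 < a ^ 2 + β ^ 2).ne'
  have ha' : (a : ℂ) ≠ 0 := by exact_mod_cast ha.ne'
  rw [div_eq_iff hden] at h
  push_cast at h ⊢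
  field_simp
  linear_combination -h

lemma ofReal_div_ofReal_mul_I (x β : ℝ) : (x : ℂ) / ((β : ℂ) * I) = ((-(x / β) : ℝ) : ℂ) * I := by
  push_cast
  rw [div_mul_eq_div_div, div_I]
  ring

theorem algebraic_core_general (p : ℂ → ℂ) (z₀ : ℂ)
    (β : ℝ) (hpz₀ : p z₀ = (β : ℂ) * I)
    (a₀ : ℝ) (ha₀ : 0 < a₀) (m : ℝ)
    (hmain : -2 * (a₀ : ℂ) * z₀ * deriv p z₀ / (((a₀ ^ 2 + β ^ 2 : ℝ)) : ℂ) = (m : ℂ)) :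
    z₀ * deriv p z₀ = ((-(m / 2) * (a₀ + β ^ 2 / a₀) : ℝ) : ℂ) ∧
    ∃ l : ℝ, z₀ * deriv p z₀ / p z₀ = (l : ℂ) * I ∧
      l = m / (2 * β) * (a₀ + β ^ 2 / a₀) := by
  have hz : z₀ * deriv p z₀ = ((-(m / 2) * (a₀ + β ^ 2 / a₀) : ℝ) : ℂ) :=
    eq_neg_half_mul_of_neg_two_mul_div_eq ha₀ (by rwa [mul_assoc (-2 * (a₀ : ℂ))] at hmain)
  refine ⟨hz, _, by rw [hz, hpz₀, ofReal_div_ofReal_mul_I], ?_⟩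
  ring

theorem algebraic_core (p : ℂ → ℂ) (z₀ : ℂ) (hz₀ : z₀ ≠ 0) (hpa : AnalyticAt ℂ p z₀)
    (β : ℝ) (hβ : β ≠ 0) (hpz₀ : p z₀ = (β : ℂ) * I)
    (a₀ : ℝ) (ha₀ : 0 < a₀) (m n : ℝ) (hn : 0 < n) (hm : n ≤ m)
    (hmain : -2 * (a₀ : ℂ) * z₀ * deriv p z₀ / (((a₀ ^ 2 + β ^ 2 : ℝ)) : ℂ) = (m : ℂ)) :
    z₀ * deriv p z₀ = ((-(m / 2) * (a₀ + β ^ 2 / a₀) : ℝ) : ℂ) ∧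
    ∃ l : ℝ, z₀ * deriv p z₀ / p z₀ = (l : ℂ) * I ∧
      l = m / (2 * β) * (a₀ + β ^ 2 / a₀) :=
  algebraic_core_general p z₀ β hpz₀ a₀ ha₀ m hmain
end
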